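/- There exist ε₀∈(0,1) and C>1 with the following property. Let V:ℝ→ℝ be 2π-periodic and C⁴ with ‖V−cos‖_{H⁴}≤ε₀. Then there exist y₁∈[−1/10,1/10] and y₂∈[π−1/10,π+1/10] such that V'(y₁)=V'(y₂)=0, V(y₁)=M:=max V, V(y₂)=m:=min V, and: (a) C^{−1}·min(y−y₁, y₂−y) ≤ −V'(y) ≤ C·min(y−y₁, y₂−y) for all y∈[y₁,y₂]; (b) C^{−1}·min(y−(y₂−2π), y₁−y) ≤ V'(y) ≤ C·min(y−(y₂−2π), y₁−y) for all y∈[y₂−2π,y₁]; (c) C^{−1}(y−y₁)² ≤ M−V(y) ≤ (y−y₁)² for all y∈[y₂−2π,y₂]; (d) C^{−1}(y−y₂)² ≤ V(y)−m ≤ (y−y₂)² for all y∈[y₁,y₁+2π]; (e) C^{−1}(y−y₂+2π)² ≤ V(y)−m ≤ (y−y₂+2π)² for all y∈[y₁−2π,y₁]; (f) |V'(y)|² ≤ C·min(V(y)−m, M−V(y)) for all y∈ℝ. -/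

import Mathlib

/-!
For periodic `h`, `‖h‖_∞ ≤ 2 max ‖h‖_{L²} ‖h'‖_{L²}`; this turns the `H⁴` bound into
`|V' + sin| ≤ 1/100` and `|V'' + cos| ≤ 1/100`. Hence `V'` has zeros `y₁` near `0` and `y₂` near
`π`, `V'' ≤ -1/2` near `y₁`, `V'' ≥ 1/2` near `y₂`, and `V' ≈ -sin` stays away from `0` in
between; this gives the linear bounds (a), (b) on `V'`. Integrating a derivative bound
`f' ≥ k min (t - p) (q - t)` against the smaller weight `k (t - p) (q - t) / (q - p)` gives the
quadratic lower bounds of (c)–(e); Taylor's bound with `|V''| ≤ 2` gives the upper ones, and (f)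
combines `|V'(y)| ≤ 2 |y - yᵢ|` with (c) and (d).
-/

open Real MeasureTheory

/-- The `L²` norm over one period `[0,2π]` of a real-valued function. -/
noncomputable def l2R (g : ℝ → ℝ) : ℝ := Real.sqrt (∫ y in (0:ℝ)..(2*π), (g y)^2)

/-- The `H⁴` norm over one period `[0,2π]` of a real-valued function. -/
noncomputable def H4R (g : ℝ → ℝ) : ℝ :=
  Real.sqrt (∑ j ∈ Finset.range 5, (l2R (iteratedDeriv j g))^2)

open Set Function

theorem Function.Periodic.deriv {f : ℝ → ℝ} {c : ℝ} (hf : Periodic f c) :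
    Periodic (deriv f) c :=
  fun x => by rw [← deriv_comp_add_const, hf.funext]

theorem Function.Periodic.iteratedDeriv {f : ℝ → ℝ} {c : ℝ} (hf : Periodic f c) (n : ℕ) :
    Periodic (iteratedDeriv n f) c := by
  induction n with
  | zero => simpa using hf
  | succ n ih => simpa [iteratedDeriv_succ] using ih.deriv

theorem sub_le_integral_abs_deriv_of_periodic {F : ℝ → ℝ} {T : ℝ} (hF : Periodic F T)
    (hT : 0 < T) (hF₁ : ContDiff ℝ 1 F) (x y : ℝ) :
    F x - F y ≤ ∫ t in (0:ℝ)..T, |deriv F t| := by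
  have hcont : Continuous (deriv F) := hF₁.continuous_deriv le_rfl
  obtain ⟨x', hx', hFx⟩ := hF.exists_mem_Ico hT x y
  rw [hFx, ← intervalIntegral.integral_deriv_eq_sub
    (fun t _ => (hF₁.differentiable one_ne_zero).differentiableAt) (hcont.intervalIntegrable _ _)]
  calc ∫ t in y..x', deriv F t ≤ ∫ t in y..x', |deriv F t| :=
        intervalIntegral.integral_mono_on hx'.1 (hcont.intervalIntegrable _ _)
          (hcont.abs.intervalIntegrable _ _) fun t _ => le_abs_self _
    _ ≤ ∫ t in y..y + T, |deriv F t| :=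
        intervalIntegral.integral_mono_interval le_rfl hx'.1 hx'.2.le
          (Filter.Eventually.of_forall fun t => abs_nonneg _) (hcont.abs.intervalIntegrable _ _)
    _ = ∫ t in (0:ℝ)..T, |deriv F t| := by
        simpa using (hF.deriv.comp (|·|)).intervalIntegral_add_eq y 0

theorem abs_le_of_l2R_le {h : ℝ → ℝ} {ε : ℝ} (hh : ContDiff ℝ 1 h) (hper : Periodic h (2 * π))
    (h₀ : l2R h ≤ ε) (h₁ : l2R (deriv h) ≤ ε) (x : ℝ) : |h x| ≤ 2 * ε := by
  obtain ⟨hε, hI₀⟩ := Real.sqrt_le_iff.mp h₀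
  have hI₁ := (Real.sqrt_le_iff.mp h₁).2
  have hc : Continuous h := hh.continuous
  have hc' : Continuous (deriv h) := hh.continuous_deriv le_rfl
  have h2π : (0:ℝ) < 2 * π := by positivity
  obtain ⟨y₀, -, hy₀⟩ := isCompact_Icc.exists_isMinOn (nonempty_Icc.2 h2π.le)
    (hc.pow 2).continuousOn (s := Icc 0 (2 * π))
  -- `h x ^ 2 ≤ h y₀ ^ 2 + ∫ |2 h h'| ≤ ε ^ 2 + ∫ (h ^ 2 + h' ^ 2) ≤ 3 ε ^ 2`
  have hmin : h y₀ ^ 2 ≤ ε ^ 2 := by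
    have : 2 * π * h y₀ ^ 2 ≤ ∫ y in (0:ℝ)..(2 * π), h y ^ 2 := by
      simpa using intervalIntegral.integral_mono_on h2π.le
        (intervalIntegrable_const (μ := volume)) ((hc.pow 2).intervalIntegrable _ _)
        fun z hz => hy₀ hz
    nlinarith [sq_nonneg (h y₀), pi_gt_three]
  have hderiv : deriv (fun t => h t ^ 2) = fun t => 2 * h t * deriv h t := by
    ext t
    simp [(hh.differentiable one_ne_zero t).hasDerivAt.fun_pow 2 |>.deriv, mul_comm]
  have hosc := sub_le_integral_abs_deriv_of_periodic (fun t => by simp [hper t]) h2π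
    (hh.pow 2) x y₀
  have hprod : ∫ t in (0:ℝ)..(2 * π), |2 * h t * deriv h t|
      ≤ ∫ t in (0:ℝ)..(2 * π), (h t ^ 2 + deriv h t ^ 2) :=
    intervalIntegral.integral_mono_on h2π.le
      (((continuous_const.mul hc).mul hc').abs.intervalIntegrable _ _)
      (((hc.pow 2).add (hc'.pow 2)).intervalIntegrable _ _) fun t _ => by
        rw [abs_mul, abs_mul, abs_two]
        nlinarith [sq_nonneg (|h t| - |deriv h t|), sq_abs (h t), sq_abs (deriv h t)]
  rw [intervalIntegral.integral_add (f := fun t => h t ^ 2) (g := fun t => deriv h t ^ 2)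
    ((hc.pow 2).intervalIntegrable _ _) ((hc'.pow 2).intervalIntegrable _ _)] at hprod
  simp only [hderiv] at hosc
  exact abs_le_of_sq_le_sq (by nlinarith) (by linarith)

theorem l2R_iteratedDeriv_le_H4R (g : ℝ → ℝ) {j : ℕ} (hj : j < 5) :
    l2R (iteratedDeriv j g) ≤ H4R g :=
  Real.le_sqrt_of_sq_le <|
    Finset.single_le_sum (fun i _ => sq_nonneg (l2R (iteratedDeriv i g))) (Finset.mem_range.2 hj)

theorem abs_iteratedDeriv_le_of_H4R_le {g : ℝ → ℝ} {ε : ℝ} (hg : ContDiff ℝ 4 g)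
    (hper : Periodic g (2 * π)) (hH : H4R g ≤ ε) {j : ℕ} (hj : j < 4) (x : ℝ) :
    |iteratedDeriv j g x| ≤ 2 * ε := by
  have hC1 : ContDiff ℝ 1 (iteratedDeriv j g) := by
    rw [iteratedDeriv_eq_iterate]
    exact hg.of_le (by exact_mod_cast (by omega : 1 + j ≤ 4)) |>.iterate_deriv' 1 j
  refine abs_le_of_l2R_le hC1 (hper.iteratedDeriv j)
    ((l2R_iteratedDeriv_le_H4R g (by omega)).trans hH) ?_ x
  rw [← iteratedDeriv_succ]
  exact (l2R_iteratedDeriv_le_H4R g (by omega)).trans hH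

theorem abs_le_mul_abs_sub_of_abs_deriv_le {w w' : ℝ → ℝ} {L p : ℝ}
    (hw : ∀ t, HasDerivAt w (w' t) t) (hL : ∀ t, |w' t| ≤ L) (hp : w p = 0) (y : ℝ) :
    |w y| ≤ L * |y - p| := by
  simpa [hp] using convex_univ.norm_image_sub_le_of_norm_hasDerivWithin_le
    (fun t _ => (hw t).hasDerivWithinAt) (fun t _ => hL t) (mem_univ p) (mem_univ y)

theorem abs_le_mul_min_of_abs_deriv_le {w w' : ℝ → ℝ} {L p q y : ℝ}
    (hw : ∀ t, HasDerivAt w (w' t) t) (hL : ∀ t, |w' t| ≤ L) (hp : w p = 0) (hq : w q = 0)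
    (hy : y ∈ Icc p q) : |w y| ≤ L * min (y - p) (q - y) := by
  have hL₀ : 0 ≤ L := (abs_nonneg _).trans (hL 0)
  rw [mul_min_of_nonneg _ _ hL₀]
  refine le_min ?_ ?_
  · simpa [abs_of_nonneg (sub_nonneg.2 hy.1)] using
      abs_le_mul_abs_sub_of_abs_deriv_le hw hL hp y
  · simpa [abs_of_nonpos (sub_nonpos.2 hy.2)] using
      abs_le_mul_abs_sub_of_abs_deriv_le hw hL hq y

theorem le_of_forall_sub_mul_deriv_nonneg {g g' : ℝ → ℝ} {p : ℝ}
    (hg : ∀ t, HasDerivAt g (g' t) t) (h : ∀ t, 0 ≤ (t - p) * g' t) (y : ℝ) : g p ≤ g y := by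
  have hcont : Continuous g := continuous_iff_continuousAt.2 fun t => (hg t).continuousAt
  rcases le_total p y with hpy | hyp
  · refine monotoneOn_of_hasDerivWithinAt_nonneg (convex_Ici p) hcont.continuousOn
      (fun t _ => (hg t).hasDerivWithinAt) (fun t ht => ?_) self_mem_Ici hpy hpy
    rw [interior_Ici, mem_Ioi] at ht
    exact nonneg_of_mul_nonneg_right (h t) (sub_pos.2 ht)
  · refine antitoneOn_of_hasDerivWithinAt_nonpos (convex_Iic p) hcont.continuousOn
      (fun t _ => (hg t).hasDerivWithinAt) (fun t ht => ?_) hyp self_mem_Iic hyp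
    rw [interior_Iic, mem_Iio] at ht
    exact nonpos_of_mul_nonneg_right (h t) (sub_neg.2 ht)

theorem abs_sub_le_of_deriv_eq_zero {f f' f'' : ℝ → ℝ} {L p : ℝ}
    (hf : ∀ t, HasDerivAt f (f' t) t) (hf' : ∀ t, HasDerivAt f' (f'' t) t)
    (hL : ∀ t, |f'' t| ≤ L) (hp : f' p = 0) (y : ℝ) :
    |f y - f p| ≤ L / 2 * (y - p) ^ 2 := by
  have hlin := abs_le_mul_abs_sub_of_abs_deriv_le hf' hL hp
  -- Since `|f' t| ≤ L |t - p|`, the function `L / 2 * (t - p) ^ 2 ∓ (f t - f p)` is antitone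
  -- left of `p` and monotone right of `p`.
  have hσ_le : ∀ σ : ℝ, |σ| = 1 → σ * (f y - f p) ≤ L / 2 * (y - p) ^ 2 := by
    intro σ hσ
    have hg : ∀ t, HasDerivAt (fun t => L / 2 * (t - p) ^ 2 - σ * (f t - f p))
        (L * (t - p) - σ * f' t) t := by
      intro t
      have hsq : HasDerivAt (fun t => (t - p) ^ 2) (2 * (t - p)) t := by
        simpa using ((hasDerivAt_id' t).sub_const p).fun_pow 2
      exact ((hsq.const_mul (L / 2)).fun_sub
        (((hf t).sub_const (f p)).const_mul σ)).congr_deriv (by ring)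
    have hsign : ∀ t, 0 ≤ (t - p) * (L * (t - p) - σ * f' t) := fun t => by
      have : |(t - p) * (σ * f' t)| ≤ L * (t - p) ^ 2 := by
        rw [abs_mul, abs_mul, hσ, one_mul, ← sq_abs (t - p), sq]
        nlinarith [hlin t, abs_nonneg (t - p)]
      nlinarith [le_abs_self ((t - p) * (σ * f' t))]
    simpa using le_of_forall_sub_mul_deriv_nonneg hg hsign y
  exact abs_le.2 ⟨by linarith [hσ_le (-1) (by simp)], by linarith [hσ_le 1 (by simp)]⟩

theorem mul_sq_le_sub_of_mul_min_le_deriv {f f' : ℝ → ℝ} {k p q : ℝ} (hk : 0 ≤ k)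
    (hf : ∀ t, HasDerivAt f (f' t) t) (hf' : ∀ t ∈ Icc p q, k * min (t - p) (q - t) ≤ f' t)
    {y : ℝ} (hy : y ∈ Icc p q) : k / 6 * (y - p) ^ 2 ≤ f y - f p := by
  rcases hy.1.eq_or_lt with rfl | hpy
  · simp
  have hpq : 0 < q - p := by linarith [hy.2]
  -- `G' t = k (t - p) (q - t) / (q - p)` is dominated by `k * min (t - p) (q - t)`.
  set G : ℝ → ℝ := fun t => f t - k * ((t - p) ^ 2 / 2 - (t - p) ^ 3 / (3 * (q - p)))
  have hG : ∀ t, HasDerivAt G (f' t - k * ((t - p) * (q - t) / (q - p))) t := by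
    intro t
    have hu : HasDerivAt (fun t => t - p) 1 t := (hasDerivAt_id' t).sub_const p
    refine ((hf t).fun_sub (((hu.fun_pow 2).div_const 2).fun_sub
      ((hu.fun_pow 3).div_const (3 * (q - p))) |>.const_mul k)).congr_deriv ?_
    field_simp
    ring
  have hmono : MonotoneOn G (Icc p q) := by
    refine monotoneOn_of_hasDerivWithinAt_nonneg (convex_Icc p q)
      (continuous_iff_continuousAt.2 fun t => (hG t).continuousAt).continuousOn
      (fun t _ => (hG t).hasDerivWithinAt) fun t ht => ?_
    rw [interior_Icc] at ht
    have hmin : (t - p) * (q - t) / (q - p) ≤ min (t - p) (q - t) := by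
      rw [le_min_iff, div_le_iff₀ hpq, div_le_iff₀ hpq]
      constructor <;> nlinarith [ht.1, ht.2]
    nlinarith [hf' t (Ioo_subset_Icc_self ht), mul_le_mul_of_nonneg_left hmin hk]
  have hGy := hmono (left_mem_Icc.2 (hy.1.trans hy.2)) hy hy.1
  have hcubic : (y - p) ^ 3 / (3 * (q - p)) ≤ (y - p) ^ 2 / 3 := by
    rw [div_le_div_iff₀ (by positivity) (by norm_num)]
    nlinarith [pow_pos (sub_pos.2 hpy) 2, hy.2]
  simp only [G, sub_self] at hGy
  norm_num at hGy
  nlinarith [mul_le_mul_of_nonneg_left hcubic hk]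

theorem mul_sq_le_sub_of_mul_min_le_neg_deriv {f f' : ℝ → ℝ} {k p q : ℝ} (hk : 0 ≤ k)
    (hf : ∀ t, HasDerivAt f (f' t) t) (hf' : ∀ t ∈ Icc q p, k * min (t - q) (p - t) ≤ -f' t)
    {y : ℝ} (hy : y ∈ Icc q p) : k / 6 * (y - p) ^ 2 ≤ f y - f p := by
  have hrefl : ∀ t, HasDerivAt (fun t => f (-t)) (-f' (-t)) t := fun t =>
    ((hf (-t)).comp t (hasDerivAt_neg t)).congr_deriv (by ring)
  have := mul_sq_le_sub_of_mul_min_le_deriv hk hrefl (p := -p) (q := -q)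
    (fun t ht => by
      have := hf' (-t) ⟨by linarith [ht.2], by linarith [ht.1]⟩
      rwa [min_comm, show -t - q = -q - t by ring, show p - -t = t - -p by ring] at this)
    (y := -y) ⟨by linarith [hy.2], by linarith [hy.1]⟩
  rwa [neg_neg, neg_neg, show (-y - -p) ^ 2 = (y - p) ^ 2 by ring] at this

theorem mul_min_le_of_deriv_near_ends {w w' : ℝ → ℝ} {p q s α β k : ℝ}
    (hw : ∀ t, HasDerivAt w (w' t) t) (hp : w p = 0) (hq : w q = 0)
    (hα_p : ∀ t ∈ Icc p (p + s), α ≤ w' t) (hα_q : ∀ t ∈ Icc (q - s) q, w' t ≤ -α)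
    (hβ : ∀ t ∈ Icc (p + s) (q - s), β ≤ w t) (hk : 0 ≤ k) (hkα : k ≤ α)
    (hkβ : k * (q - p) ≤ 2 * β) {y : ℝ} (hy : y ∈ Icc p q) :
    k * min (y - p) (q - y) ≤ w y := by
  have hdiff : Differentiable ℝ w := fun t => (hw t).differentiableAt
  have hderiv : ∀ t, deriv w t = w' t := fun t => (hw t).deriv
  rcases le_total y (p + s) with hys | hys
  · have := (convex_Icc p (p + s)).mul_sub_le_image_sub_of_le_deriv
      hdiff.continuous.continuousOn hdiff.differentiableOn
      (fun t ht => (hderiv t).symm ▸ hα_p t (interior_subset ht))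
      p ⟨le_rfl, hy.1.trans hys⟩ y ⟨hy.1, hys⟩ hy.1
    rw [hp, sub_zero] at this
    nlinarith [min_le_left (y - p) (q - y), hy.1]
  rcases le_total (q - s) y with hys' | hys'
  · have := (convex_Icc (q - s) q).image_sub_le_mul_sub_of_deriv_le
      hdiff.continuous.continuousOn hdiff.differentiableOn
      (fun t ht => (hderiv t).symm ▸ hα_q t (interior_subset ht))
      y ⟨hys', hy.2⟩ q ⟨hys'.trans hy.2, le_rfl⟩ hy.2
    rw [hq, zero_sub] at this
    nlinarith [min_le_right (y - p) (q - y), hy.2]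
  · have : min (y - p) (q - y) ≤ (q - p) / 2 := by
      rcases min_cases (y - p) (q - y) with ⟨h, _⟩ | ⟨h, _⟩ <;> rw [h] <;> linarith
    nlinarith [hβ y ⟨hys, hys'⟩]

theorem div_two_le_sin_of_mem_Icc {r t : ℝ} (hr : 0 ≤ r) (ht : t ∈ Icc r (π - r)) :
    r / 2 ≤ sin t := by
  have hr' : r / 2 ≤ 2 / π * r := by
    rw [div_mul_eq_mul_div, le_div_iff₀ pi_pos]; nlinarith [pi_lt_four]
  refine hr'.trans ?_
  rcases le_total t (π / 2) with h | h
  · exact (mul_le_mul_of_nonneg_left ht.1 (by positivity)).trans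
      (mul_le_sin (hr.trans ht.1) h)
  · rw [← sin_pi_sub]
    exact (mul_le_mul_of_nonneg_left (by linarith [ht.2]) (by positivity)).trans
      (mul_le_sin (by linarith [ht.2]) (by linarith))

structure IsC2CloseToCos (V : ℝ → ℝ) : Prop where
  differentiable : Differentiable ℝ V
  differentiable_deriv : Differentiable ℝ (deriv V)
  periodic : Periodic V (2 * π)
  abs_deriv_add_sin_le : ∀ x, |deriv V x + sin x| ≤ 1 / 100
  abs_deriv_deriv_add_cos_le : ∀ x, |deriv (deriv V) x + cos x| ≤ 1 / 100

namespace IsC2CloseToCos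

variable {V : ℝ → ℝ}

theorem hasDerivAt (hV : IsC2CloseToCos V) (t : ℝ) : HasDerivAt V (deriv V t) t :=
  (hV.differentiable t).hasDerivAt

theorem hasDerivAt_deriv (hV : IsC2CloseToCos V) (t : ℝ) :
    HasDerivAt (deriv V) (deriv (deriv V) t) t :=
  (hV.differentiable_deriv t).hasDerivAt

theorem abs_deriv_deriv_le (hV : IsC2CloseToCos V) (t : ℝ) : |deriv (deriv V) t| ≤ 2 := by
  have := abs_le.1 (hV.abs_deriv_deriv_add_cos_le t)
  exact abs_le.2 ⟨by linarith [cos_le_one t], by linarith [neg_one_le_cos t]⟩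

theorem deriv_deriv_le_of_abs_le (hV : IsC2CloseToCos V) {t : ℝ} (ht : |t| ≤ 1 / 2) :
    deriv (deriv V) t ≤ -1 / 2 := by
  have hcos := one_sub_sq_div_two_le_cos (x := t)
  have := (abs_le.1 (hV.abs_deriv_deriv_add_cos_le t)).2
  nlinarith [sq_abs t, abs_nonneg t]

theorem le_deriv_deriv_of_abs_sub_pi_le (hV : IsC2CloseToCos V) {t : ℝ}
    (ht : |t - π| ≤ 1 / 2) : 1 / 2 ≤ deriv (deriv V) t := by
  have hcos := one_sub_sq_div_two_le_cos (x := t - π)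
  rw [cos_sub_pi] at hcos
  have := (abs_le.1 (hV.abs_deriv_deriv_add_cos_le t)).1
  nlinarith [sq_abs (t - π), abs_nonneg (t - π)]

theorem deriv_le_of_mem_Icc (hV : IsC2CloseToCos V) {t : ℝ}
    (ht : t ∈ Icc (3 / 10) (π - 3 / 10)) : deriv V t ≤ -1 / 10 := by
  have hsin := div_two_le_sin_of_mem_Icc (by norm_num) ht
  linarith [(abs_le.1 (hV.abs_deriv_add_sin_le t)).2]

theorem le_deriv_of_mem_Icc (hV : IsC2CloseToCos V) {t : ℝ}
    (ht : t ∈ Icc (-π + 3 / 10) (-3 / 10)) : 1 / 10 ≤ deriv V t := by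
  have hsin := div_two_le_sin_of_mem_Icc (r := 3 / 10) (t := -t) (by norm_num)
    ⟨by linarith [ht.2], by linarith [ht.1]⟩
  rw [sin_neg] at hsin
  linarith [(abs_le.1 (hV.abs_deriv_add_sin_le t)).1]

theorem exists_deriv_eq_zero_near_zero (hV : IsC2CloseToCos V) :
    ∃ a ∈ Icc (-(1:ℝ)/10) (1/10), deriv V a = 0 := by
  have hsin := div_two_le_sin_of_mem_Icc (r := 1 / 10) (t := 1 / 10) (by norm_num)
    ⟨le_rfl, by linarith [pi_gt_three]⟩
  have hleft := (abs_le.1 (hV.abs_deriv_add_sin_le (-(1:ℝ)/10))).1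
  have hright := (abs_le.1 (hV.abs_deriv_add_sin_le (1/10))).2
  rw [neg_div, sin_neg] at hleft
  exact intermediate_value_Icc' (by norm_num) hV.differentiable_deriv.continuous.continuousOn
    ⟨by linarith, by rw [neg_div]; linarith⟩

theorem exists_deriv_eq_zero_near_pi (hV : IsC2CloseToCos V) :
    ∃ b ∈ Icc (π - 1/10) (π + 1/10), deriv V b = 0 := by
  have hsin := div_two_le_sin_of_mem_Icc (r := 1 / 10) (t := 1 / 10) (by norm_num)
    ⟨le_rfl, by linarith [pi_gt_three]⟩
  have hleft := (abs_le.1 (hV.abs_deriv_add_sin_le (π - 1/10))).2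
  have hright := (abs_le.1 (hV.abs_deriv_add_sin_le (π + 1/10))).1
  rw [sin_pi_sub] at hleft
  rw [show sin (π + 1/10) = -sin (1/10) by rw [add_comm, sin_add_pi]] at hright
  exact intermediate_value_Icc (by linarith) hV.differentiable_deriv.continuous.continuousOn
    ⟨by linarith, by linarith⟩

theorem mul_min_le_neg_deriv (hV : IsC2CloseToCos V) {a b : ℝ}
    (ha : a ∈ Icc (-(1:ℝ)/10) (1/10)) (hWa : deriv V a = 0)
    (hb : b ∈ Icc (π - 1/10) (π + 1/10)) (hWb : deriv V b = 0) {y : ℝ} (hy : y ∈ Icc a b) :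
    1 / 20 * min (y - a) (b - y) ≤ -deriv V y := by
  obtain ⟨ha₁, ha₂⟩ := ha
  obtain ⟨hb₁, hb₂⟩ := hb
  refine mul_min_le_of_deriv_near_ends (w := fun t => -deriv V t)
    (fun t => (hV.hasDerivAt_deriv t).neg) (by simp [hWa]) (by simp [hWb])
    (s := 2 / 5) (α := 1 / 2) (β := 1 / 10)
    (fun t ht => ?_) (fun t ht => ?_) (fun t ht => ?_) (by norm_num) (by norm_num)
    (by linarith [pi_lt_d2]) hy
  · linarith [hV.deriv_deriv_le_of_abs_le (t := t)
      (abs_le.2 ⟨by linarith [ht.1], by linarith [ht.2]⟩)]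
  · linarith [hV.le_deriv_deriv_of_abs_sub_pi_le (t := t)
      (abs_le.2 ⟨by linarith [ht.1], by linarith [ht.2]⟩)]
  · linarith [hV.deriv_le_of_mem_Icc (t := t) ⟨by linarith [ht.1], by linarith [ht.2]⟩]

theorem mul_min_le_deriv (hV : IsC2CloseToCos V) {a b : ℝ}
    (ha : a ∈ Icc (-(1:ℝ)/10) (1/10)) (hWa : deriv V a = 0)
    (hb : b ∈ Icc (π - 1/10) (π + 1/10)) (hWb : deriv V b = 0) {y : ℝ}
    (hy : y ∈ Icc (b - 2 * π) a) :
    1 / 20 * min (y - (b - 2 * π)) (a - y) ≤ deriv V y := by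
  obtain ⟨ha₁, ha₂⟩ := ha
  obtain ⟨hb₁, hb₂⟩ := hb
  refine mul_min_le_of_deriv_near_ends hV.hasDerivAt_deriv
    (by rw [hV.periodic.deriv.sub_eq, hWb]) hWa (s := 2 / 5) (α := 1 / 2) (β := 1 / 10)
    (fun t ht => ?_) (fun t ht => ?_) (fun t ht => ?_) (by norm_num) (by norm_num)
    (by linarith [pi_lt_d2]) hy
  · rw [← hV.periodic.deriv.deriv t]
    exact hV.le_deriv_deriv_of_abs_sub_pi_le
      (abs_le.2 ⟨by linarith [ht.1], by linarith [ht.2]⟩)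
  · linarith [hV.deriv_deriv_le_of_abs_le (t := t)
      (abs_le.2 ⟨by linarith [ht.1], by linarith [ht.2]⟩)]
  · exact hV.le_deriv_of_mem_Icc ⟨by linarith [ht.1], by linarith [ht.2]⟩

theorem exists_mem_Ico (hV : IsC2CloseToCos V) (y c : ℝ) :
    ∃ z ∈ Ico c (c + 2 * π), V y = V z ∧ deriv V y = deriv V z := by
  have hpair : Periodic (fun x => (V x, deriv V x)) (2 * π) :=
    fun x => Prod.ext (hV.periodic x) (hV.periodic.deriv x)
  obtain ⟨z, hz, hyz⟩ := hpair.exists_mem_Ico two_pi_pos y c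
  exact ⟨z, hz, Prod.mk.inj hyz⟩

theorem abs_sub_le_sq (hV : IsC2CloseToCos V) {p : ℝ} (hp : deriv V p = 0) (y : ℝ) :
    |V y - V p| ≤ (y - p) ^ 2 := by
  simpa using abs_sub_le_of_deriv_eq_zero hV.hasDerivAt hV.hasDerivAt_deriv
    hV.abs_deriv_deriv_le hp y

theorem sq_deriv_le_of_deriv_eq_zero (hV : IsC2CloseToCos V) {p : ℝ} (hp : deriv V p = 0) (y : ℝ) :
    deriv V y ^ 2 ≤ 4 * (y - p) ^ 2 := by
  have := abs_le_mul_abs_sub_of_abs_deriv_le hV.hasDerivAt_deriv hV.abs_deriv_deriv_le hp y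
  nlinarith [sq_abs (deriv V y), sq_abs (y - p), abs_nonneg (deriv V y)]

theorem mul_sq_le_max_sub (hV : IsC2CloseToCos V) {a b : ℝ}
    (ha : a ∈ Icc (-(1:ℝ)/10) (1/10)) (hWa : deriv V a = 0)
    (hb : b ∈ Icc (π - 1/10) (π + 1/10)) (hWb : deriv V b = 0) {y : ℝ}
    (hy : y ∈ Icc (b - 2 * π) b) : 1 / 120 * (y - a) ^ 2 ≤ V a - V y := by
  have hk : (0:ℝ) ≤ 1 / 20 := by norm_num
  have hV' : ∀ t, HasDerivAt (fun t => -V t) (-deriv V t) t := fun t => (hV.hasDerivAt t).neg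
  rcases le_total a y with hay | hya
  · have := mul_sq_le_sub_of_mul_min_le_deriv hk hV'
      (fun t ht => hV.mul_min_le_neg_deriv ha hWa hb hWb ht) ⟨hay, hy.2⟩
    linarith
  · have := mul_sq_le_sub_of_mul_min_le_neg_deriv hk hV'
      (fun t ht => by simpa using hV.mul_min_le_deriv ha hWa hb hWb ht) ⟨hy.1, hya⟩
    linarith

theorem mul_sq_le_sub_min (hV : IsC2CloseToCos V) {a b : ℝ}
    (ha : a ∈ Icc (-(1:ℝ)/10) (1/10)) (hWa : deriv V a = 0)
    (hb : b ∈ Icc (π - 1/10) (π + 1/10)) (hWb : deriv V b = 0) {y : ℝ}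
    (hy : y ∈ Icc a (a + 2 * π)) : 1 / 120 * (y - b) ^ 2 ≤ V y - V b := by
  have hk : (0:ℝ) ≤ 1 / 20 := by norm_num
  rcases le_total y b with hyb | hby
  · have := mul_sq_le_sub_of_mul_min_le_neg_deriv hk hV.hasDerivAt
      (fun t ht => hV.mul_min_le_neg_deriv ha hWa hb hWb ht) ⟨hy.1, hyb⟩
    linarith
  · have := mul_sq_le_sub_of_mul_min_le_deriv hk hV.hasDerivAt (fun t ht => by
      have := hV.mul_min_le_deriv ha hWa hb hWb (y := t - 2 * π)
        ⟨by linarith [ht.1], by linarith [ht.2]⟩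
      rwa [hV.periodic.deriv.sub_eq, sub_sub_sub_cancel_right, sub_sub_eq_add_sub] at this)
      ⟨hby, hy.2⟩
    linarith

theorem sq_deriv_le_mul_min (hV : IsC2CloseToCos V) {a b : ℝ}
    (ha : a ∈ Icc (-(1:ℝ)/10) (1/10)) (hWa : deriv V a = 0)
    (hb : b ∈ Icc (π - 1/10) (π + 1/10)) (hWb : deriv V b = 0) (y : ℝ) :
    deriv V y ^ 2 ≤ 500 * min (V y - V b) (V a - V y) := by
  obtain ⟨z, hz, hVz, hWz⟩ := hV.exists_mem_Ico y (b - 2 * π)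
  obtain ⟨z', hz', hVz', hWz'⟩ := hV.exists_mem_Ico y a
  rw [mul_min_of_nonneg _ _ (by norm_num)]
  refine le_min ?_ ?_
  · rw [hVz', hWz']
    nlinarith [hV.mul_sq_le_sub_min ha hWa hb hWb ⟨hz'.1, hz'.2.le⟩,
      hV.sq_deriv_le_of_deriv_eq_zero hWb z']
  · rw [hVz, hWz]
    nlinarith [hV.mul_sq_le_max_sub ha hWa hb hWb ⟨hz.1, by linarith [hz.2]⟩,
      hV.sq_deriv_le_of_deriv_eq_zero hWa z]

theorem exists_critical_points (hV : IsC2CloseToCos V) :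
    ∃ y₁ ∈ Icc (-(1:ℝ)/10) (1/10), ∃ y₂ ∈ Icc (π - 1/10) (π + 1/10),
      deriv V y₁ = 0 ∧ deriv V y₂ = 0 ∧
      (∀ y : ℝ, V y ≤ V y₁) ∧ (∀ y : ℝ, V y₂ ≤ V y) ∧
      (∀ y ∈ Icc y₁ y₂,
        (500:ℝ)⁻¹ * min (y - y₁) (y₂ - y) ≤ -(deriv V y) ∧
          -(deriv V y) ≤ 500 * min (y - y₁) (y₂ - y)) ∧
      (∀ y ∈ Icc (y₂ - 2*π) y₁,
        (500:ℝ)⁻¹ * min (y - (y₂ - 2*π)) (y₁ - y) ≤ deriv V y ∧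
          deriv V y ≤ 500 * min (y - (y₂ - 2*π)) (y₁ - y)) ∧
      (∀ y ∈ Icc (y₂ - 2*π) y₂,
        (500:ℝ)⁻¹ * (y - y₁)^2 ≤ V y₁ - V y ∧ V y₁ - V y ≤ (y - y₁)^2) ∧
      (∀ y ∈ Icc y₁ (y₁ + 2*π),
        (500:ℝ)⁻¹ * (y - y₂)^2 ≤ V y - V y₂ ∧ V y - V y₂ ≤ (y - y₂)^2) ∧
      (∀ y ∈ Icc (y₁ - 2*π) y₁,
        (500:ℝ)⁻¹ * (y - y₂ + 2*π)^2 ≤ V y - V y₂ ∧ V y - V y₂ ≤ (y - y₂ + 2*π)^2) ∧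
      (∀ y : ℝ, (deriv V y)^2 ≤ 500 * min (V y - V y₂) (V y₁ - V y)) := by
  obtain ⟨a, ha, hWa⟩ := hV.exists_deriv_eq_zero_near_zero
  obtain ⟨b, hb, hWb⟩ := hV.exists_deriv_eq_zero_near_pi
  have hWb' : deriv V (b - 2 * π) = 0 := by rw [hV.periodic.deriv.sub_eq, hWb]
  have hmax := fun y (hy : y ∈ Icc (b - 2 * π) b) => hV.mul_sq_le_max_sub ha hWa hb hWb hy
  have hmin := fun y (hy : y ∈ Icc a (a + 2 * π)) => hV.mul_sq_le_sub_min ha hWa hb hWb hy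
  have hd : ∀ y ∈ Icc a (a + 2 * π),
      (500:ℝ)⁻¹ * (y - b) ^ 2 ≤ V y - V b ∧ V y - V b ≤ (y - b) ^ 2 := fun y hy =>
    ⟨by nlinarith [hmin y hy, sq_nonneg (y - b)], (abs_le.1 (hV.abs_sub_le_sq hWb y)).2⟩
  refine ⟨a, ha, b, hb, hWa, hWb, fun y => ?_, fun y => ?_, fun y hy => ?_, fun y hy => ?_,
    fun y hy => ⟨?_, ?_⟩, hd, fun y hy => ?_, hV.sq_deriv_le_mul_min ha hWa hb hWb⟩
  · obtain ⟨z, hz, hVz, -⟩ := hV.exists_mem_Ico y (b - 2 * π)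
    nlinarith [hmax z ⟨hz.1, by linarith [hz.2]⟩, sq_nonneg (z - a)]
  · obtain ⟨z, hz, hVz, -⟩ := hV.exists_mem_Ico y a
    nlinarith [hmin z ⟨hz.1, hz.2.le⟩, sq_nonneg (z - b)]
  · have hm : 0 ≤ min (y - a) (b - y) := le_min (by linarith [hy.1]) (by linarith [hy.2])
    have hup := abs_le_mul_min_of_abs_deriv_le hV.hasDerivAt_deriv hV.abs_deriv_deriv_le
      hWa hWb hy
    exact ⟨by linarith [hV.mul_min_le_neg_deriv ha hWa hb hWb hy],
      by linarith [neg_le_abs (deriv V y)]⟩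
  · have hm : 0 ≤ min (y - (b - 2 * π)) (a - y) :=
      le_min (by linarith [hy.1]) (by linarith [hy.2])
    have hup := abs_le_mul_min_of_abs_deriv_le hV.hasDerivAt_deriv hV.abs_deriv_deriv_le
      hWb' hWa hy
    exact ⟨by linarith [hV.mul_min_le_deriv ha hWa hb hWb hy],
      by linarith [le_abs_self (deriv V y)]⟩
  · nlinarith [hmax y hy, sq_nonneg (y - a)]
  · linarith [(abs_le.1 (hV.abs_sub_le_sq hWa y)).1]
  · have := hd (y + 2 * π) ⟨by linarith [hy.1], by linarith [hy.2]⟩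
    rwa [hV.periodic y, show y + 2 * π - b = y - b + 2 * π by ring] at this

end IsC2CloseToCos

theorem stmt6 :
    ∃ ε₀ C : ℝ, ε₀ ∈ Set.Ioo (0:ℝ) 1 ∧ 1 < C ∧
      ∀ (V : ℝ → ℝ), Function.Periodic V (2*π) → ContDiff ℝ 4 V →
        H4R (fun y => V y - Real.cos y) ≤ ε₀ →
      ∃ y₁ ∈ Set.Icc (-(1:ℝ)/10) (1/10), ∃ y₂ ∈ Set.Icc (π - 1/10) (π + 1/10),
        deriv V y₁ = 0 ∧ deriv V y₂ = 0 ∧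
        (∀ y : ℝ, V y ≤ V y₁) ∧ (∀ y : ℝ, V y₂ ≤ V y) ∧
        (∀ y ∈ Set.Icc y₁ y₂,
          C⁻¹ * min (y - y₁) (y₂ - y) ≤ -(deriv V y) ∧
            -(deriv V y) ≤ C * min (y - y₁) (y₂ - y)) ∧
        (∀ y ∈ Set.Icc (y₂ - 2*π) y₁,
          C⁻¹ * min (y - (y₂ - 2*π)) (y₁ - y) ≤ deriv V y ∧
            deriv V y ≤ C * min (y - (y₂ - 2*π)) (y₁ - y)) ∧
        (∀ y ∈ Set.Icc (y₂ - 2*π) y₂,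
          C⁻¹ * (y - y₁)^2 ≤ V y₁ - V y ∧ V y₁ - V y ≤ (y - y₁)^2) ∧
        (∀ y ∈ Set.Icc y₁ (y₁ + 2*π),
          C⁻¹ * (y - y₂)^2 ≤ V y - V y₂ ∧ V y - V y₂ ≤ (y - y₂)^2) ∧
        (∀ y ∈ Set.Icc (y₁ - 2*π) y₁,
          C⁻¹ * (y - y₂ + 2*π)^2 ≤ V y - V y₂ ∧ V y - V y₂ ≤ (y - y₂ + 2*π)^2) ∧
        (∀ y : ℝ, (deriv V y)^2 ≤ C * min (V y - V y₂) (V y₁ - V y)) := by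
  refine ⟨1 / 200, 500, ⟨by norm_num, by norm_num⟩, by norm_num, fun V hper hV hH => ?_⟩
  have hg := fun j (hj : j < 4) x =>
    (abs_iteratedDeriv_le_of_H4R_le (hV.sub contDiff_cos) (hper.sub cos_periodic) hH hj
      x).trans_eq (by norm_num : 2 * (1 / 200 : ℝ) = 1 / 100)
  have hV₁ : Differentiable ℝ V := hV.differentiable (by norm_num)
  have hV₂ : Differentiable ℝ (deriv V) := (hV.iterate_deriv' 3 1).differentiable (by norm_num)
  have h₁ : deriv (fun y => V y - cos y) = fun y => deriv V y + sin y := by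
    ext y
    simp [deriv_fun_sub (hV₁ y) differentiableAt_cos]
  have h₂ : deriv (fun y => deriv V y + sin y) = fun y => deriv (deriv V) y + cos y := by
    ext y
    simp [deriv_fun_add (hV₂ y) differentiableAt_sin]
  refine IsC2CloseToCos.exists_critical_points ⟨hV₁, hV₂, hper, fun x => ?_, fun x => ?_⟩
  · simpa [h₁] using hg 1 (by norm_num) x
  · simpa [iteratedDeriv_succ, h₁, h₂] using hg 2 (by norm_num) x
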